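/- Let f(q) = ∏_{m≥1} (1-q^{3m})^3 (1-q^{9m})^{-1} = ∑_{n≥0} c(n) q^n. Then for every positive integer l with l ≡ 1 (mod 3), c(l) = 0. -/

import Mathlib

open PowerSeries Finset

/-- Coefficient of `q^n` in `∏_{m≥1} (1-q^{3m})^3 (1-q^{9m})^{-1}` (truncation is exact). -/
noncomputable def etaQuotCoeff7 (n : ℕ) : ℚ :=
  PowerSeries.coeff (R := ℚ) n
    (∏ m ∈ Finset.Icc 1 n, ((1 - (X : PowerSeries ℚ) ^ (3 * m)) ^ 3 * (1 - X ^ (9 * m))⁻¹))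

/-!
Every factor of the product is a power series in `q^3`: this is clear for `(1 - q^{3m})^3`, and
the inverse of a power series in `q^3` is again one, since the recursion computing its
coefficients only ever combines indices of the same residue mod 3. Hence so is the product, and
its coefficients vanish at every `l ≡ 1 (mod 3)`.
-/

namespace PowerSeries

section CommRing

variable {R : Type*} [CommRing R]

def seriesInXPow (d : ℕ) : Subring R⟦X⟧ where
  carrier := {f | ∀ n, ¬ d ∣ n → coeff n f = 0}
  zero_mem' _ _ := map_zero _
  one_mem' n hn := by
    rw [coeff_one, if_neg (by rintro rfl; exact hn (dvd_zero d))]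
  add_mem' hf hg n hn := by rw [map_add, hf n hn, hg n hn, add_zero]
  neg_mem' hf n hn := by rw [map_neg, hf n hn, neg_zero]
  mul_mem' {f g} hf hg n hn := by
    rw [coeff_mul]
    refine sum_eq_zero fun ⟨i, j⟩ hij => ?_
    rw [HasAntidiagonal.mem_antidiagonal] at hij
    by_cases hi : d ∣ i
    · rw [hg j fun hj => hn (hij ▸ dvd_add hi hj), mul_zero]
    · rw [hf i hi, zero_mul]

theorem X_pow_mem_seriesInXPow {d k : ℕ} (hk : d ∣ k) : (X : R⟦X⟧) ^ k ∈ seriesInXPow d :=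
  fun n hn => by rw [coeff_X_pow, if_neg (by rintro rfl; exact hn hk)]

end CommRing

theorem inv_mem_seriesInXPow {k : Type*} [Field k] {d : ℕ} {f : k⟦X⟧}
    (hf : f ∈ seriesInXPow d) : f⁻¹ ∈ seriesInXPow d := by
  intro n hn
  induction n using Nat.strong_induction_on with
  | _ n ih =>
    rw [coeff_inv, if_neg (by rintro rfl; exact hn (dvd_zero d))]
    suffices h : ∑ x ∈ antidiagonal n,
        (if x.2 < n then coeff x.1 f * coeff x.2 f⁻¹ else 0) = 0 by
      simp [h]
    refine sum_eq_zero fun ⟨i, j⟩ hij => ?_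
    rw [HasAntidiagonal.mem_antidiagonal] at hij
    split_ifs with hjn
    · by_cases hi : d ∣ i
      · rw [ih j hjn fun hj => hn (hij ▸ dvd_add hi hj), mul_zero]
      · rw [hf i hi, zero_mul]
    · rfl

end PowerSeries

theorem stmt7_general (l : ℕ) (hmod : l ≡ 1 [MOD 3]) : etaQuotCoeff7 l = 0 := by
  have hl : ¬ 3 ∣ l := by
    rw [Nat.dvd_iff_mod_eq_zero, hmod]
    decide
  have one_sub_mem {k : ℕ} (hk : 3 ∣ k) : 1 - (X : ℚ⟦X⟧) ^ k ∈ seriesInXPow 3 :=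
    sub_mem (one_mem _) (X_pow_mem_seriesInXPow hk)
  refine (prod_mem fun m _ => mul_mem ?_ ?_ : _ ∈ seriesInXPow 3) l hl
  · exact pow_mem (one_sub_mem (dvd_mul_right 3 m)) 3
  · exact inv_mem_seriesInXPow (one_sub_mem (dvd_mul_of_dvd_left (by norm_num) m))

theorem stmt7 (l : ℕ) (hl : 0 < l) (hmod : l ≡ 1 [MOD 3]) : etaQuotCoeff7 l = 0 :=
  stmt7_general l hmod
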